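/- For k < l in [d], h_{kl} is a fundamental hole of the CDEM semigroup: for every pair (i,j) ∈ [d]², the vector h_{kl} − a_{ij} is not in Q_sat = K(A) ∩ ℤ^{2d+1}. -/

import Mathlib

open Finset

/-- The column `a_{ij}` of the CDEM matrix: 1 in coordinate `j`, 1 in coordinate
`d + i`, 1 in coordinate `2d` (the last one) iff `i = j`, and 0 elsewhere
(coordinates are 0-based). -/
def acol (d : ℕ) (i j : Fin d) : Fin (2 * d + 1) → ℤ := fun t =>
  (if (t : ℕ) = (j : ℕ) then 1 else 0) +
  (if (t : ℕ) = d + (i : ℕ) then 1 else 0) +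
  (if (t : ℕ) = 2 * d ∧ i = j then 1 else 0)

/-- The vector `h_{kl} = (a_{ll} + a_{lk} + a_{kl} + a_{kk}) / 2`. -/
def hvec (d : ℕ) (k l : Fin d) : Fin (2 * d + 1) → ℤ := fun t =>
  (acol d l l t + acol d l k t + acol d k l t + acol d k k t) / 2

/-- The CDEM semigroup: nonnegative integer combinations of the columns. -/
def cdemQ (d : ℕ) : Set (Fin (2 * d + 1) → ℤ) :=
  {b | ∃ x : Fin d → Fin d → ℕ, b = fun t => ∑ i, ∑ j, (x i j : ℤ) * acol d i j t}

/-- The real cone `K(A)` generated by the CDEM columns. -/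
def cdemCone (d : ℕ) (v : Fin (2 * d + 1) → ℝ) : Prop :=
  ∃ x : Fin d → Fin d → ℝ, (∀ i j, 0 ≤ x i j) ∧
    v = fun t => ∑ i, ∑ j, x i j * (acol d i j t : ℝ)

/-- The saturation `Q_sat = K(A) ∩ ℤ^{2d+1}` of the CDEM semigroup. -/
def cdemQsat (d : ℕ) : Set (Fin (2 * d + 1) → ℤ) :=
  {b | cdemCone d fun t => (b t : ℝ)}

/-- The `i`-th coordinate (0-based, `i < d`) as an index into `Fin (2d+1)`. -/
def idx1 (d : ℕ) (i : Fin d) : Fin (2 * d + 1) := ⟨(i : ℕ), by have := i.isLt; omega⟩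

/-- The `(d+i)`-th coordinate as an index into `Fin (2d+1)`. -/
def idx2 (d : ℕ) (i : Fin d) : Fin (2 * d + 1) := ⟨d + (i : ℕ), by have := i.isLt; omega⟩

/-! If `h_{kl} - a_{ij} = A x` with `x ≥ 0`, the coordinates of `A x` are the column sums, the row
sums and the trace of the `d × d` matrix `x`, so `x` has column sums `e_k + e_l - e_j`, row sums
`e_k + e_l - e_i` and trace `1 - [i = j]`. Nonnegativity forces `i, j ∈ {k, l}`; with `σ` the
transposition `(k l)`, the row and column sums are then the unit vectors `e_{σ i}` and `e_{σ j}`,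
so `x` is a matrix unit and its trace is `[σ i = σ j] = [i = j]`, a contradiction. -/

-- Such a matrix is the matrix unit at `(a, b)`.
lemma sum_diag_eq_of_rowSum_colSum {ι : Type*} [Fintype ι] [DecidableEq ι] {x : ι → ι → ℝ}
    (hx : ∀ i j, 0 ≤ x i j) {a b : ι}
    (hrow : ∀ i, ∑ j, x i j = if i = a then 1 else 0)
    (hcol : ∀ j, ∑ i, x i j = if j = b then 1 else 0) :
    ∑ t, x t t = if a = b then 1 else 0 := by
  have hzero : ∀ i j, i ≠ a ∨ j ≠ b → x i j = 0 := by
    rintro i j (hi | hj)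
    · exact (sum_eq_zero_iff_of_nonneg fun j _ => hx i j).1 (by rw [hrow, if_neg hi]) j
        (mem_univ j)
    · exact (sum_eq_zero_iff_of_nonneg fun i _ => hx i j).1 (by rw [hcol, if_neg hj]) i
        (mem_univ i)
  have hab : x a b = 1 := by
    rw [← sum_eq_single b (fun j _ hj => hzero a j (Or.inr hj)) (fun h => (h (mem_univ b)).elim),
      hrow, if_pos rfl]
  split_ifs with h
  · subst h
    rw [sum_eq_single a (fun t _ ht => hzero t t (Or.inl ht))
      (fun h => (h (mem_univ a)).elim), hab]
  · exact sum_eq_zero fun t _ => hzero t t (by by_contra!; exact h (this.1.symm.trans this.2))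

lemma indicator_add_indicator_sub_indicator {α R : Type*} [DecidableEq α] [AddCommGroup R] [One R]
    {k l i : α} (hkl : k ≠ l) (hi : i = k ∨ i = l) (t : α) :
    ((if t = k then 1 else 0) + (if t = l then 1 else 0) - (if t = i then 1 else 0) : R) =
      if t = Equiv.swap k l i then 1 else 0 := by
  rcases hi with rfl | rfl <;> simp only [Equiv.swap_apply_left, Equiv.swap_apply_right] <;>
    split_ifs <;> simp_all

section CDEM

variable {d : ℕ}

lemma acol_idx1 (i j t : Fin d) : acol d i j (idx1 d t) = if t = j then 1 else 0 := by
  have := t.isLt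
  simp only [acol, idx1, Fin.ext_iff]
  split_ifs <;> omega

lemma acol_idx2 (i j t : Fin d) : acol d i j (idx2 d t) = if t = i then 1 else 0 := by
  have := j.isLt
  simp only [acol, idx2, Fin.ext_iff]
  split_ifs <;> omega

lemma acol_last (i j : Fin d) : acol d i j (Fin.last (2 * d)) = if i = j then 1 else 0 := by
  have := i.isLt
  have := j.isLt
  rw [acol, Fin.val_last, if_neg (by omega), if_neg (by omega)]
  simp

lemma hvec_idx1 (k l t : Fin d) :
    hvec d k l (idx1 d t) = (if t = k then 1 else 0) + (if t = l then 1 else 0) := by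
  simp only [hvec, acol_idx1]
  split_ifs <;> omega

lemma hvec_idx2 (k l t : Fin d) :
    hvec d k l (idx2 d t) = (if t = k then 1 else 0) + (if t = l then 1 else 0) := by
  simp only [hvec, acol_idx2]
  split_ifs <;> omega

lemma hvec_last {k l : Fin d} (hkl : k ≠ l) : hvec d k l (Fin.last (2 * d)) = 1 := by
  simp [hvec, acol_last, hkl, hkl.symm]

variable {x : Fin d → Fin d → ℝ} {v : Fin (2 * d + 1) → ℤ}
  (hv : (fun t => (v t : ℝ)) = fun t => ∑ i, ∑ j, x i j * (acol d i j t : ℝ))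
include hv

lemma colSum_eq_of_eq_sum_mul_acol (t : Fin d) : ∑ i, x i t = v (idx1 d t) := by
  simp [congrFun hv (idx1 d t), acol_idx1]

lemma rowSum_eq_of_eq_sum_mul_acol (t : Fin d) : ∑ j, x t j = v (idx2 d t) := by
  simp [congrFun hv (idx2 d t), acol_idx2]

lemma sum_diag_eq_of_eq_sum_mul_acol : ∑ t, x t t = v (Fin.last (2 * d)) := by
  simp [congrFun hv (Fin.last (2 * d)), acol_last]

end CDEM

lemma eq_or_eq_of_indicator_sub_one_nonneg {α : Type*} [DecidableEq α] {k l i : α}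
    (h : (0 : ℝ) ≤ (if i = k then 1 else 0) + (if i = l then 1 else 0) - 1) : i = k ∨ i = l := by
  by_contra! hne
  norm_num [hne.1, hne.2] at h

theorem hvec_fundamental_general (d : ℕ) (k l : Fin d) (hkl : k < l) :
    ∀ i j : Fin d, (fun t => hvec d k l t - acol d i j t) ∉ cdemQsat d := by
  rintro i j ⟨x, hx, heq⟩
  have hcol (t : Fin d) : ∑ i', x i' t =
      (if t = k then 1 else 0) + (if t = l then 1 else 0) - (if t = j then 1 else 0) := by
    simp [colSum_eq_of_eq_sum_mul_acol heq, hvec_idx1, acol_idx1]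
  have hrow (t : Fin d) : ∑ j', x t j' =
      (if t = k then 1 else 0) + (if t = l then 1 else 0) - (if t = i then 1 else 0) := by
    simp [rowSum_eq_of_eq_sum_mul_acol heq, hvec_idx2, acol_idx2]
  have htrace : ∑ t, x t t = 1 - if i = j then 1 else 0 := by
    simp [sum_diag_eq_of_eq_sum_mul_acol heq, hvec_last hkl.ne, acol_last]
  have hi : i = k ∨ i = l := eq_or_eq_of_indicator_sub_one_nonneg <| by
    simpa [hrow i] using sum_nonneg fun j' (_ : j' ∈ univ) => hx i j'
  have hj : j = k ∨ j = l := eq_or_eq_of_indicator_sub_one_nonneg <| by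
    simpa [hcol j] using sum_nonneg fun i' (_ : i' ∈ univ) => hx i' j
  have h := sum_diag_eq_of_rowSum_colSum hx
    (fun t => (hrow t).trans (indicator_add_indicator_sub_indicator hkl.ne hi t))
    (fun t => (hcol t).trans (indicator_add_indicator_sub_indicator hkl.ne hj t))
  rw [htrace] at h
  simp only [Equiv.apply_eq_iff_eq] at h
  split_ifs at h <;> norm_num at h

/-- For `k < l`, `h_{kl}` is a fundamental hole of the CDEM semigroup: for every pair
`(i,j)`, the vector `h_{kl} - a_{ij}` is not in `Q_sat = K(A) ∩ ℤ^{2d+1}`. -/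
theorem hvec_fundamental (d : ℕ) (hd : 2 ≤ d) (k l : Fin d) (hkl : k < l) :
    ∀ i j : Fin d, (fun t => hvec d k l t - acol d i j t) ∉ cdemQsat d :=
  hvec_fundamental_general d k l hkl
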